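/- Let q > 1 and 0 < u < 1 be real numbers, and let i ≥ j ≥ 0 be integers. With (1/q)_m = ∏_{r=1}^m (1 − q^{−r}), (u/q)_m = ∏_{r=1}^m (1 − u·q^{−r}) for m ≥ 0, and the convention (u/q)_{−1} = 1/(1 − u), one has ∑_{k=j}^{i} (1/((1/q)_{i−k} (u/q)_{i+k})) · ((1 − u/q^{2k}) (−1)^{k−j} (u/q)_{k+j−1} / (q^{\binom{k−j}{2}} (1/q)_{k−j})) = 1 if i = j and 0 if i > j. (Equivalently: the matrix with (i,j) entry (1 − u/q^{2i})(−1)^{i−j}(u/q)_{i+j−1}/(q^{\binom{i−j}{2}}(1/q)_{i−j}) is the inverse of the matrix A = (1/((1/q)_{i−j}(u/q)_{i+j})).) -/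

import Mathlib

/-- `(x)_m = ∏_{r=1}^m (1 − x·q^{−r})`. -/
noncomputable def qPoch (q x : ℝ) (m : ℕ) : ℝ := ∏ r ∈ Finset.range m, (1 - x * q⁻¹ ^ (r + 1))

/-- `(u/q)_m` for `m ≥ −1`, with the convention `(u/q)_{−1} = 1/(1 − u)`: here the argument
is `m + 1`, so `qPochShift q u 0 = (u/q)_{−1} = (1−u)⁻¹` and `qPochShift q u (m+1) = (u/q)_m`. -/
noncomputable def qPochShift (q u : ℝ) (m : ℕ) : ℝ :=
  if m = 0 then (1 - u)⁻¹ else qPoch q u (m - 1)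

lemma qPoch_succ (q x : ℝ) (m : ℕ) :
    qPoch q x (m + 1) = qPoch q x m * (1 - x * q⁻¹ ^ (m + 1)) :=
  Finset.prod_range_succ _ _

lemma qPochShift_succ (q u : ℝ) (m : ℕ) : qPochShift q u (m + 1) = qPoch q u m := by
  simp [qPochShift]

lemma aux2 {q u : ℝ} (hq : 1 < q) (hu0 : 0 ≤ u) (hu1 : u < 1) (e : ℕ) :
    0 < 1 - u * (q ^ e)⁻¹ := by
  have h1 : (1:ℝ) ≤ q ^ e := one_le_pow₀ hq.le
  have h3 : (0:ℝ) < q ^ e := lt_of_lt_of_le one_pos h1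
  have h2 : (q ^ e)⁻¹ ≤ 1 := inv_le_one_of_one_le₀ h1
  nlinarith [inv_pos.mpr h3]

lemma aux1 {q : ℝ} (hq : 1 < q) (e : ℕ) : 0 < 1 - (q ^ (e + 1))⁻¹ := by
  have h1 : (1:ℝ) < q ^ (e + 1) := one_lt_pow₀ hq (by omega)
  have := inv_lt_one_of_one_lt₀ h1
  linarith

lemma qPoch_pos {q x : ℝ} (hq : 1 < q) (hx0 : 0 ≤ x) (hx1 : x ≤ 1) (m : ℕ) :
    0 < qPoch q x m := by
  apply Finset.prod_pos
  intro r _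
  have h1 : (1:ℝ) < q ^ (r + 1) := one_lt_pow₀ hq (by omega)
  have h2 : (0:ℝ) < (q ^ (r + 1))⁻¹ := inv_pos.mpr (lt_trans one_pos h1)
  have h3 := inv_lt_one_of_one_lt₀ h1
  have h4 : x * q⁻¹ ^ (r + 1) = x * (q ^ (r + 1))⁻¹ := by rw [inv_pow]
  rw [h4]
  nlinarith

lemma telescope_Icc (f : ℕ → ℝ) (a b : ℕ) (hab : a ≤ b) :
    ∑ k ∈ Finset.Icc a b, (f k - f (k + 1)) = f a - f (b + 1) := by
  rw [← Finset.Ico_add_one_right_eq_Icc, Finset.sum_Ico_eq_sum_range]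
  have h := Finset.sum_range_sub' (fun t => f (a + t)) (b + 1 - a)
  calc ∑ t ∈ Finset.range (b + 1 - a), (f (a + t) - f (a + t + 1))
      = f (a + 0) - f (a + (b + 1 - a)) := h
    _ = f a - f (b + 1) := by rw [Nat.add_zero]; congr 2; omega

lemma L1 {q u : ℝ} (hq : 1 < q) (hu1 : u < 1) (t : ℕ) :
    (1 - u / q ^ (2 * t)) * qPochShift q u (t + t) = qPoch q u (t + t) := by
  rcases t with _ | s
  · simp only [Nat.zero_add, Nat.mul_zero, pow_zero, qPochShift, if_pos rfl]
    have h0 : qPoch q u 0 = 1 := by simp [qPoch]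
    rw [h0, div_one]
    exact mul_inv_cancel₀ (by linarith : (1:ℝ) - u ≠ 0)
  · have h1 : s + 1 + (s + 1) = (2 * s + 1) + 1 := by omega
    rw [h1, qPochShift_succ]
    conv_rhs => rw [qPoch_succ]
    rw [show u / q ^ (2 * (s + 1)) = u * q⁻¹ ^ (2 * s + 1 + 1) from by
      rw [div_eq_mul_inv, ← inv_pow, show 2 * (s + 1) = 2 * s + 1 + 1 from by omega]]
    ring

lemma case_top (C f1 f2 s B qc X A : ℝ) (hC : C ≠ 0) (hf1 : f1 ≠ 0) (hf2 : f2 ≠ 0)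
    (hqc : qc ≠ 0) (hX : X ≠ 0) (hA : A ≠ 0) :
    (C * f1 * f2)⁻¹ * (f2 * s * B / (qc * (X * A))) = s * B / (A * 1 * X * qc * (C * f1)) := by
  field_simp

lemma case_mid (X1 X2 B C g1 g2 s qc u a b w P : ℝ)
    (hX1 : X1 ≠ 0) (hX2 : X2 ≠ 0) (hC : C ≠ 0) (hg1 : g1 ≠ 0) (hg2 : g2 ≠ 0) (hqc : qc ≠ 0)
    (hfa : 1 - a ≠ 0) (hfd : 1 - b ≠ 0) (hfb : 1 - a * b ≠ 0)
    (hg3 : 1 - u * (w * a * b) ≠ 0) (hP : P * a = 1) :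
    (X1 * (1 - b) * (C * g1 * g2 * (1 - u * (w * a * b))))⁻¹ *
        ((1 - u * (w * a)) * s * B / (qc * (X2 * (1 - a)))) =
      s * B / ((1 - a * b) * (X1 * (1 - b)) * X2 * qc * (C * g1 * g2)) -
        s * -1 * (B * (1 - u * w)) /
          ((1 - a * b) * X1 * (X2 * (1 - a)) * (qc * P) *
            (C * g1 * g2 * (1 - u * (w * a * b)))) := by
  have ha : a ≠ 0 := by intro h; rw [h, mul_zero] at hP; exact zero_ne_one hP
  obtain rfl : P = a⁻¹ := eq_inv_of_mul_eq_one_left hP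
  have hg3' : 1 - b * u * w * a ≠ 0 := by convert hg3 using 2; ring
  have hfb' : 1 - b * a ≠ 0 := by convert hfb using 2; ring
  field_simp
  ring

noncomputable def Gaux (q u : ℝ) (i j k : ℕ) : ℝ :=
  (-1 : ℝ) ^ (k - j) * qPoch q u (k + j - 1) /
    ((1 - q⁻¹ ^ (i - j)) * qPoch q 1 (i - k) * qPoch q 1 (k - j - 1) *
      q ^ ((k - j).choose 2) * qPoch q u (i + k - 1))

set_option maxHeartbeats 4000000 in
/-- For `q > 1`, `0 < u < 1` and integers `i ≥ j ≥ 0`,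
`∑_{k=j}^{i} (1/((1/q)_{i−k}(u/q)_{i+k})) · ((1 − u/q^{2k})(−1)^{k−j}(u/q)_{k+j−1}
  / (q^{C(k−j,2)} (1/q)_{k−j}))` equals `1` if `i = j` and `0` if `i > j`;
i.e. the matrix with `(i,j)` entry `(1 − u/q^{2i})(−1)^{i−j}(u/q)_{i+j−1}/(q^{C(i−j,2)}(1/q)_{i−j})`
is the inverse of `A = (1/((1/q)_{i−j}(u/q)_{i+j}))`. -/
theorem inverse_matrix_identity (q u : ℝ) (hq : 1 < q) (hu0 : 0 < u) (hu1 : u < 1)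
    (i j : ℕ) (hij : j ≤ i) :
    ∑ k ∈ Finset.Icc j i,
        (qPoch q 1 (i - k) * qPoch q u (i + k))⁻¹ *
          ((1 - u / q ^ (2 * k)) * (-1 : ℝ) ^ (k - j) * qPochShift q u (k + j) /
            (q ^ Nat.choose (k - j) 2 * qPoch q 1 (k - j))) =
      if i = j then 1 else 0 := by
  have hq0 : (0:ℝ) < q := lt_trans one_pos hq
  have hq0' : q ≠ 0 := ne_of_gt hq0
  have hPu : ∀ m, qPoch q u m ≠ 0 := fun m => ne_of_gt (qPoch_pos hq hu0.le hu1.le m)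
  have hP1 : ∀ m, qPoch q 1 m ≠ 0 := fun m => ne_of_gt (qPoch_pos hq zero_le_one le_rfl m)
  have haU : ∀ e : ℕ, (1:ℝ) - u * (q ^ e)⁻¹ ≠ 0 :=
    fun e => ne_of_gt (aux2 hq hu0.le hu1 e)
  have ha1 : ∀ e : ℕ, (1:ℝ) - (q ^ (e + 1))⁻¹ ≠ 0 := fun e => ne_of_gt (aux1 hq e)
  have hq1 : qPoch q 1 0 = 1 := by simp [qPoch]
  rcases eq_or_lt_of_le hij with rfl | hlt
  · -- i = j
    rw [if_pos rfl, Finset.Icc_self, Finset.sum_singleton, Nat.sub_self, hq1]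
    rw [show Nat.choose 0 2 = 0 from rfl, pow_zero, pow_zero, one_mul, mul_one, one_mul,
      div_one, L1 hq hu1 j]
    exact inv_mul_cancel₀ (hPu _)
  · rw [if_neg (by omega : ¬ i = j)]
    set F : ℕ → ℝ := fun k => if j < k ∧ k ≤ i then Gaux q u i j k else 0 with hF
    have key : ∀ k ∈ Finset.Icc j i,
        (qPoch q 1 (i - k) * qPoch q u (i + k))⁻¹ *
          ((1 - u / q ^ (2 * k)) * (-1 : ℝ) ^ (k - j) * qPochShift q u (k + j) /
            (q ^ Nat.choose (k - j) 2 * qPoch q 1 (k - j))) = F k - F (k + 1) := by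
      intro k hk
      rw [Finset.mem_Icc] at hk
      obtain ⟨hjk, hki⟩ := hk
      rcases eq_or_lt_of_le hjk with rfl | hjk'
      · -- k = j
        obtain ⟨d, rfl⟩ : ∃ d, i = j + d + 1 := ⟨i - j - 1, by omega⟩
        have eFj : F j = 0 := by rw [hF]; simp
        have eFj1 : F (j + 1) = Gaux q u (j + d + 1) j (j + 1) := by
          rw [hF]; simp only []; rw [if_pos ⟨by omega, by omega⟩]
        rw [eFj, eFj1, zero_sub, Gaux]
        rw [show j + 1 - j - 1 = 0 from by omega,
          show j + 1 - j = 1 from by omega,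
          show j + 1 + j - 1 = j + j from by omega,
          show j + d + 1 - (j + 1) = d from by omega,
          show j + d + 1 - j = d + 1 from by omega,
          show j + d + 1 + (j + 1) - 1 = 2 * j + d + 1 from by omega,
          show j + d + 1 + j = 2 * j + d + 1 from by omega,
          Nat.sub_self, hq1,
          show Nat.choose 0 2 = 0 from rfl,
          show Nat.choose 1 2 = 0 from rfl]
        simp only [pow_zero, pow_one, one_mul, mul_one, div_one]
        rw [L1 hq hu1 j]
        simp only [qPoch_succ, one_mul, inv_pow]
        field_simp [hPu, hP1, haU, ha1]
      · rcases eq_or_lt_of_le hki with rfl | hki'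
        · -- k = i
          obtain ⟨m, rfl⟩ : ∃ m, k = j + m + 1 := ⟨k - j - 1, by omega⟩
          have eFk : F (j + m + 1) = Gaux q u (j + m + 1) j (j + m + 1) := by
            rw [hF]; simp only []; rw [if_pos ⟨by omega, by omega⟩]
          have eFk1 : F (j + m + 1 + 1) = 0 := by
            rw [hF]; simp only []; rw [if_neg (by omega)]
          rw [eFk, eFk1, sub_zero, Gaux]
          rw [show j + m + 1 - j - 1 = m from by omega,
            show j + m + 1 - j = m + 1 from by omega,
            show j + m + 1 + j - 1 = 2 * j + m from by omega,
            show j + m + 1 + j = 2 * j + m + 1 from by omega,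
            show j + m + 1 + (j + m + 1) - 1 = 2 * j + 2 * m + 1 from by omega,
            show j + m + 1 + (j + m + 1) = 2 * j + 2 * m + 1 + 1 from by omega,
            Nat.sub_self, hq1,
            show u / q ^ (2 * (j + m + 1)) = u * q⁻¹ ^ (2 * j + 2 * m + 1 + 1) from by
              rw [div_eq_mul_inv, ← inv_pow,
                show 2 * (j + m + 1) = 2 * j + 2 * m + 1 + 1 from by omega],
            qPochShift_succ]
          simp only [qPoch_succ, one_mul, inv_pow]
          generalize (-1:ℝ) ^ (m + 1) = s
          exact case_top _ _ _ _ _ _ _ _ (hPu _) (haU _) (haU _) (pow_ne_zero _ hq0')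
            (hP1 _) (ha1 _)
        · -- j < k < i
          obtain ⟨m, rfl⟩ : ∃ m, k = j + m + 1 := ⟨k - j - 1, by omega⟩
          obtain ⟨d, rfl⟩ : ∃ d, i = j + m + d + 2 := ⟨i - j - m - 2, by omega⟩
          have eFk : F (j + m + 1) = Gaux q u (j + m + d + 2) j (j + m + 1) := by
            rw [hF]; simp only []; rw [if_pos ⟨by omega, by omega⟩]
          have eFk1 : F (j + m + 1 + 1) = Gaux q u (j + m + d + 2) j (j + m + 1 + 1) := by
            rw [hF]; simp only []; rw [if_pos ⟨by omega, by omega⟩]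
          rw [eFk, eFk1, Gaux, Gaux]
          rw [show j + m + 1 + 1 - j - 1 = m + 1 from by omega,
            show j + m + 1 + 1 - j = m + 2 from by omega,
            show j + m + 1 - j - 1 = m from by omega,
            show j + m + 1 - j = m + 1 from by omega,
            show j + m + 1 + 1 + j - 1 = 2 * j + m + 1 from by omega,
            show j + m + 1 + j - 1 = 2 * j + m from by omega,
            show j + m + 1 + j = 2 * j + m + 1 from by omega,
            show j + m + d + 2 - (j + m + 1 + 1) = d from by omega,
            show j + m + d + 2 - (j + m + 1) = d + 1 from by omega,
            show j + m + d + 2 - j = m + d + 1 + 1 from by omega,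
            show j + m + d + 2 + (j + m + 1 + 1) - 1 = 2 * j + 2 * m + d + 2 + 1 from by omega,
            show j + m + d + 2 + (j + m + 1) - 1 = 2 * j + 2 * m + d + 2 from by omega,
            show j + m + d + 2 + (j + m + 1) = 2 * j + 2 * m + d + 2 + 1 from by omega,
            show ((-1:ℝ)) ^ (m + 2) = (-1:ℝ) ^ (m + 1) * (-1) from pow_succ _ _,
            show Nat.choose (m + 2) 2 = Nat.choose (m + 1) 2 + (m + 1) from by
              rw [show m + 2 = (m + 1) + 1 from rfl, Nat.choose_succ_succ (m + 1) 1,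
                Nat.choose_one_right, show Nat.succ 1 = 2 from rfl]
              omega,
            pow_add q (Nat.choose (m + 1) 2) (m + 1),
            show u / q ^ (2 * (j + m + 1)) = u * (q⁻¹ ^ (2 * j + m + 1) * q⁻¹ ^ (m + 1)) from by
              rw [div_eq_mul_inv, ← pow_add, ← inv_pow,
                show 2 * (j + m + 1) = 2 * j + m + 1 + (m + 1) from by omega],
            qPochShift_succ]
          simp only [qPoch_succ, one_mul, inv_pow]
          generalize (-1:ℝ) ^ (m + 1) = s
          rw [show ((q:ℝ) ^ (2 * j + 2 * m + d + 2 + 1))⁻¹ =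
                (q ^ (2 * j + m + 1))⁻¹ * (q ^ (m + 1))⁻¹ * (q ^ (d + 1))⁻¹ from by
              rw [← mul_inv, ← mul_inv, ← pow_add, ← pow_add,
                show 2 * j + m + 1 + (m + 1) + (d + 1) = 2 * j + 2 * m + d + 2 + 1 from by omega],
            show ((q:ℝ) ^ (m + d + 1 + 1))⁻¹ = (q ^ (m + 1))⁻¹ * (q ^ (d + 1))⁻¹ from by
              rw [← mul_inv, ← pow_add, show m + 1 + (d + 1) = m + d + 1 + 1 from by omega]]
          have hfb : (1:ℝ) - (q ^ (m + 1))⁻¹ * (q ^ (d + 1))⁻¹ ≠ 0 := by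
            rw [← mul_inv, ← pow_add]
            exact ha1 (m + 1 + d)
          have hg3 : (1:ℝ) - u * ((q ^ (2 * j + m + 1))⁻¹ * (q ^ (m + 1))⁻¹ * (q ^ (d + 1))⁻¹) ≠ 0 := by
            rw [← mul_inv, ← mul_inv, ← pow_add, ← pow_add]
            exact haU _
          exact case_mid _ _ _ _ _ _ _ _ _ _ _ _ _ (hP1 d) (hP1 m) (hPu _) (haU _) (haU _)
            (pow_ne_zero _ hq0') (ha1 m) (ha1 d) hfb hg3 (mul_inv_cancel₀ (pow_ne_zero _ hq0'))
    rw [Finset.sum_congr rfl key, telescope_Icc F j i hij]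
    have e1 : F j = 0 := by rw [hF]; simp
    have e2 : F (i + 1) = 0 := by rw [hF]; simp only []; rw [if_neg (by omega)]
    rw [e1, e2, sub_zero]
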